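/- arXiv:1310.1286 — 8 statements merged into one kernel-verified Lean document; each statement's English description precedes it below -/
import Mathlib

section
/- Let n ≥ 1, let p, q > 1 with 1/p + 1/q = 1, and let (a_k)_{k=1}^n and (b_k)_{k=1}^n be positive non-increasing sequences with 0 < a ≤ a_k ≤ A < ∞ and 0 < b ≤ b_k ≤ B < ∞ for all k. Then (∑_{k=1}^n (-1)^{k+1} a_k^q)^{1/q} · (∑_{k=1}^n (-1)^{k+1} b_k^p)^{1/p} ≤ (A^{q-1}/b + B^{p-1}/a) · ∑_{k=1}^n (-1)^{k+1} a_k b_k. -/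
/-!
With `C = q A^(q-1) / b`, the sequence `C a_k b_k - a_k^q` is non-negative and non-increasing:
by convexity of `t ↦ t^q` the drop `a_k^q - a_(k+1)^q` is at most `q A^(q-1) (a_k - a_(k+1))`,
while `a_k b_k - a_(k+1) b_(k+1) ≥ b (a_k - a_(k+1))`. An alternating sum of a non-negative
non-increasing sequence is non-negative (it lies between `0` and its first term), so
`∑ ± a_k^q ≤ C ∑ ± a_k b_k`, and symmetrically for `b^p`. Weighted AM-GM,
`X^(1/q) Y^(1/p) ≤ X/q + Y/p`, combines the two bounds.
-/

open Finset

def altSum (c : ℕ → ℝ) (n : ℕ) : ℝ := ∑ k ∈ Icc 1 n, (-1) ^ (k + 1) * c k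

theorem altSum_zero (c : ℕ → ℝ) : altSum c 0 = 0 := by simp [altSum]

theorem altSum_succ (c : ℕ → ℝ) (n : ℕ) :
    altSum c (n + 1) = c 1 - altSum (fun k => c (k + 1)) n := by
  rw [altSum, altSum, Icc_eq_cons_Ioc (by omega), sum_cons, ← Icc_add_one_left_eq_Ioc,
    ← map_add_right_Icc, sum_map, sub_eq_add_neg, ← sum_neg_distrib]
  simp only [addRightEmbedding_apply, pow_succ]
  ring_nf

theorem altSum_sub (u v : ℕ → ℝ) (n : ℕ) :
    altSum (fun k => u k - v k) n = altSum u n - altSum v n := by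
  simp only [altSum, mul_sub, sum_sub_distrib]

theorem altSum_const_mul (C : ℝ) (c : ℕ → ℝ) (n : ℕ) :
    altSum (fun k => C * c k) n = C * altSum c n := by
  simp only [altSum, mul_sum, mul_left_comm]

theorem altSum_succ_mem_Icc (n : ℕ) (c : ℕ → ℝ) (hc0 : ∀ k, 1 ≤ k → k ≤ n + 1 → 0 ≤ c k)
    (hc : ∀ k, 1 ≤ k → k < n + 1 → c (k + 1) ≤ c k) :
    altSum c (n + 1) ∈ Set.Icc 0 (c 1) := by
  induction n generalizing c with
  | zero => simpa [altSum] using hc0 1 le_rfl le_rfl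
  | succ n ih =>
    obtain ⟨htail_nonneg, htail_le⟩ := ih (fun k => c (k + 1))
      (fun k hk hkn => hc0 (k + 1) (by omega) (by omega))
      (fun k hk hkn => hc (k + 1) (by omega) (by omega))
    have hc21 := hc 1 le_rfl (by omega)
    rw [altSum_succ]
    constructor <;> linarith

theorem altSum_nonneg (n : ℕ) (c : ℕ → ℝ) (hc0 : ∀ k, 1 ≤ k → k ≤ n → 0 ≤ c k)
    (hc : ∀ k, 1 ≤ k → k < n → c (k + 1) ≤ c k) : 0 ≤ altSum c n := by
  cases n with
  | zero => rw [altSum_zero]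
  | succ n => exact (altSum_succ_mem_Icc n c hc0 hc).1

theorem altSum_le_altSum (n : ℕ) (u v : ℕ → ℝ) (h0 : ∀ k, 1 ≤ k → k ≤ n → u k ≤ v k)
    (h : ∀ k, 1 ≤ k → k < n → u k - u (k + 1) ≤ v k - v (k + 1)) :
    altSum u n ≤ altSum v n := by
  have := altSum_nonneg n (fun k => v k - u k) (fun k hk hkn => sub_nonneg.2 (h0 k hk hkn))
    (fun k hk hkn => by linarith [h k hk hkn])
  rw [altSum_sub] at this
  linarith

theorem rpow_sub_rpow_le_mul_sub {q A x y : ℝ} (hq : 1 ≤ q) (hy : 0 ≤ y) (hyx : y ≤ x)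
    (hxA : x ≤ A) : x ^ q - y ^ q ≤ q * A ^ (q - 1) * (x - y) := by
  rcases hyx.eq_or_lt with rfl | hyx
  · simp
  have hx : 0 < x := hy.trans_lt hyx
  have hslope : slope (fun t : ℝ => t ^ q) y x ≤ q * x ^ (q - 1) :=
    (convexOn_rpow hq).slope_le_of_hasDerivAt hy hx.le hyx
      (Real.hasDerivAt_rpow_const (Or.inl hx.ne'))
  rw [slope_def_field, div_le_iff₀ (sub_pos.2 hyx)] at hslope
  calc x ^ q - y ^ q ≤ q * x ^ (q - 1) * (x - y) := hslope
    _ ≤ q * A ^ (q - 1) * (x - y) := by gcongr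

theorem rpow_sub_rpow_le_div_mul_sub_mul {q A bL x y b b' : ℝ} (hq : 1 ≤ q) (hbL : 0 < bL)
    (hy : 0 ≤ y) (hyx : y ≤ x) (hxA : x ≤ A) (hb' : bL ≤ b') (hb'b : b' ≤ b) :
    x ^ q - y ^ q ≤ q * A ^ (q - 1) / bL * (x * b - y * b') := by
  have hA : 0 ≤ A := hy.trans (hyx.trans hxA)
  have hprod : (x - y) * bL ≤ x * b - y * b' := by nlinarith
  calc x ^ q - y ^ q ≤ q * A ^ (q - 1) * (x - y) := rpow_sub_rpow_le_mul_sub hq hy hyx hxA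
    _ = q * A ^ (q - 1) / bL * ((x - y) * bL) := by field_simp
    _ ≤ q * A ^ (q - 1) / bL * (x * b - y * b') := by gcongr

theorem altSum_rpow_le_mul_altSum_mul (n : ℕ) {q A bL : ℝ} (a b : ℕ → ℝ) (hq : 1 ≤ q)
    (hbL : 0 < bL) (ha_mono : ∀ k, 1 ≤ k → k < n → a (k + 1) ≤ a k)
    (hb_mono : ∀ k, 1 ≤ k → k < n → b (k + 1) ≤ b k)
    (ha_bdd : ∀ k, 1 ≤ k → k ≤ n → 0 ≤ a k ∧ a k ≤ A)
    (hb_bdd : ∀ k, 1 ≤ k → k ≤ n → bL ≤ b k) :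
    altSum (fun k => a k ^ q) n ≤ q * A ^ (q - 1) / bL * altSum (fun k => a k * b k) n := by
  rw [← altSum_const_mul]
  apply altSum_le_altSum
  · intro k hk hkn
    have := rpow_sub_rpow_le_div_mul_sub_mul hq hbL le_rfl (ha_bdd k hk hkn).1
      (ha_bdd k hk hkn).2 (hb_bdd k hk hkn) le_rfl
    simpa [Real.zero_rpow (by linarith : q ≠ 0)] using this
  · intro k hk hkn
    rw [← mul_sub]
    exact rpow_sub_rpow_le_div_mul_sub_mul hq hbL (ha_bdd (k + 1) (by omega) (by omega)).1
      (ha_mono k hk hkn) (ha_bdd k hk hkn.le).2 (hb_bdd (k + 1) (by omega) (by omega))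
      (hb_mono k hk hkn)

theorem altSum_rpow_nonneg (n : ℕ) {q : ℝ} (a : ℕ → ℝ) (hq : 0 ≤ q)
    (ha_mono : ∀ k, 1 ≤ k → k < n → a (k + 1) ≤ a k) (ha : ∀ k, 1 ≤ k → k ≤ n → 0 ≤ a k) :
    0 ≤ altSum (fun k => a k ^ q) n :=
  altSum_nonneg n _ (fun k hk hkn => Real.rpow_nonneg (ha k hk hkn) q)
    (fun k hk hkn => Real.rpow_le_rpow (ha (k + 1) (by omega) (by omega)) (ha_mono k hk hkn) hq)

theorem alternating_holder_general (n : ℕ) (p q : ℝ) (hp : 1 < p) (hq : 1 < q)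
    (hpq : 1 / p + 1 / q = 1) (a b : ℕ → ℝ) (aL A bL B : ℝ)
    (haL : 0 < aL) (hbL : 0 < bL)
    (ha_mono : ∀ k, 1 ≤ k → k < n → a (k + 1) ≤ a k)
    (hb_mono : ∀ k, 1 ≤ k → k < n → b (k + 1) ≤ b k)
    (ha_bdd : ∀ k, 1 ≤ k → k ≤ n → aL ≤ a k ∧ a k ≤ A)
    (hb_bdd : ∀ k, 1 ≤ k → k ≤ n → bL ≤ b k ∧ b k ≤ B) :
    (∑ k ∈ Finset.Icc 1 n, (-1 : ℝ) ^ (k + 1) * a k ^ q) ^ (1 / q) *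
      (∑ k ∈ Finset.Icc 1 n, (-1 : ℝ) ^ (k + 1) * b k ^ p) ^ (1 / p) ≤
    (A ^ (q - 1) / bL + B ^ (p - 1) / aL) *
      ∑ k ∈ Finset.Icc 1 n, (-1 : ℝ) ^ (k + 1) * (a k * b k) := by
  change altSum (fun k => a k ^ q) n ^ (1 / q) * altSum (fun k => b k ^ p) n ^ (1 / p) ≤
    (A ^ (q - 1) / bL + B ^ (p - 1) / aL) * altSum (fun k => a k * b k) n
  set Z := altSum (fun k => a k * b k) n
  have ha k hk hkn : 0 ≤ a k ∧ a k ≤ A := ⟨haL.le.trans (ha_bdd k hk hkn).1, (ha_bdd k hk hkn).2⟩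
  have hb k hk hkn : 0 ≤ b k ∧ b k ≤ B := ⟨hbL.le.trans (hb_bdd k hk hkn).1, (hb_bdd k hk hkn).2⟩
  have hX := altSum_rpow_le_mul_altSum_mul n a b hq.le hbL ha_mono hb_mono ha
    fun k hk hkn => (hb_bdd k hk hkn).1
  have hY := altSum_rpow_le_mul_altSum_mul n b a hp.le haL hb_mono ha_mono hb
    fun k hk hkn => (ha_bdd k hk hkn).1
  simp only [mul_comm (b _) (a _)] at hY
  calc _ ≤ 1 / q * altSum (fun k => a k ^ q) n + 1 / p * altSum (fun k => b k ^ p) n :=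
        Real.geom_mean_le_arith_mean2_weighted (by positivity) (by positivity)
          (altSum_rpow_nonneg n a (q := q) (by linarith) ha_mono fun k hk hkn => (ha k hk hkn).1)
          (altSum_rpow_nonneg n b (q := p) (by linarith) hb_mono fun k hk hkn => (hb k hk hkn).1)
          ((add_comm _ _).trans hpq)
    _ ≤ 1 / q * (q * A ^ (q - 1) / bL * Z) + 1 / p * (p * B ^ (p - 1) / aL * Z) := by gcongr
    _ = (A ^ (q - 1) / bL + B ^ (p - 1) / aL) * Z := by field_simp

/-- Theorem 1 (right-hand side): reverse Hölder-type inequality with alternating signs. -/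
theorem alternating_holder (n : ℕ) (hn : 1 ≤ n) (p q : ℝ) (hp : 1 < p) (hq : 1 < q)
    (hpq : 1 / p + 1 / q = 1) (a b : ℕ → ℝ) (aL A bL B : ℝ)
    (haL : 0 < aL) (hbL : 0 < bL)
    (ha_mono : ∀ k, 1 ≤ k → k < n → a (k + 1) ≤ a k)
    (hb_mono : ∀ k, 1 ≤ k → k < n → b (k + 1) ≤ b k)
    (ha_bdd : ∀ k, 1 ≤ k → k ≤ n → aL ≤ a k ∧ a k ≤ A)
    (hb_bdd : ∀ k, 1 ≤ k → k ≤ n → bL ≤ b k ∧ b k ≤ B) :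
    (∑ k ∈ Finset.Icc 1 n, (-1 : ℝ) ^ (k + 1) * a k ^ q) ^ (1 / q) *
      (∑ k ∈ Finset.Icc 1 n, (-1 : ℝ) ^ (k + 1) * b k ^ p) ^ (1 / p) ≤
    (A ^ (q - 1) / bL + B ^ (p - 1) / aL) *
      ∑ k ∈ Finset.Icc 1 n, (-1 : ℝ) ^ (k + 1) * (a k * b k) :=
  alternating_holder_general n p q hp hq hpq a b aL A bL B haL hbL ha_mono hb_mono ha_bdd hb_bdd
end

section
/- For every even n ≥ 2 and every q > 1 there exist positive non-increasing sequences (a_k)_{k=1}^n and (b_k)_{k=1}^n such that ∑_{k=1}^n (-1)^{k+1} a_k^q = 0 while ∑_{k=1}^n (-1)^{k+1} a_k b_k > 0. Consequently, the quotient ((∑ (-1)^{k+1} a_k^q)^{1/q} (∑ (-1)^{k+1} b_k^p)^{1/p}) / (∑ (-1)^{k+1} a_k b_k) cannot be bounded from below by any positive constant. -/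
/-! With `a ≡ 1` every alternating sum of powers of `a` over an even range vanishes, whatever `q`,
while for the decreasing `b k = n + 1 - k` each pair `b (2i+1) - b (2i+2)` contributes `1`. -/

open Finset

lemma sum_Icc_one_two_mul_neg_one_pow_mul {R : Type*} [CommRing R] (f : ℕ → R) (m : ℕ) :
    ∑ k ∈ Icc 1 (2 * m), (-1 : R) ^ (k + 1) * f k =
      ∑ i ∈ range m, (f (2 * i + 1) - f (2 * i + 2)) := by
  induction m with
  | zero => simp
  | succ m ih =>
    rw [show 2 * (m + 1) = 2 * m + 1 + 1 by ring, sum_Icc_succ_top (by omega),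
      sum_Icc_succ_top (by omega), ih, sum_range_succ]
    simp only [pow_succ, pow_mul]
    ring

theorem alternating_holder_no_lower_bound_general (n : ℕ) (hn : 2 ≤ n) (hne : Even n)
    (q : ℝ) :
    ∃ a b : ℕ → ℝ,
      (∀ k, 1 ≤ k → k ≤ n → 0 < a k) ∧
      (∀ k, 1 ≤ k → k ≤ n → 0 < b k) ∧
      (∀ k, 1 ≤ k → k < n → a (k + 1) ≤ a k) ∧
      (∀ k, 1 ≤ k → k < n → b (k + 1) ≤ b k) ∧
      (∑ k ∈ Finset.Icc 1 n, (-1 : ℝ) ^ (k + 1) * a k ^ q = 0) ∧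
      (0 < ∑ k ∈ Finset.Icc 1 n, (-1 : ℝ) ^ (k + 1) * (a k * b k)) := by
  obtain ⟨m, rfl⟩ : ∃ m, n = 2 * m := hne.exists_two_nsmul n
  have hm : (0 : ℝ) < m := by exact_mod_cast (by omega : 0 < m)
  refine ⟨fun _ ↦ 1, fun k ↦ 2 * m + 1 - k, fun _ _ _ ↦ one_pos, fun k _ hk ↦ ?_,
    fun _ _ _ ↦ le_rfl, fun k _ _ ↦ ?_, ?_, ?_⟩
  · have : (k : ℝ) ≤ 2 * m := by exact_mod_cast hk
    linarith
  · push_cast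
    linarith
  · simpa using sum_Icc_one_two_mul_neg_one_pow_mul (fun _ ↦ (1 : ℝ)) m
  · have pair_sub : ∀ i : ℕ, (2 * m + 1 - ↑(2 * i + 1) - (2 * m + 1 - ↑(2 * i + 2)) : ℝ) = 1 := by
      intro i; push_cast; ring
    simpa only [one_mul, sum_Icc_one_two_mul_neg_one_pow_mul, pair_sub, sum_const, card_range,
      nsmul_eq_mul, mul_one] using hm

/-- Theorem 1 (left-hand side): for every even `n ≥ 2` and `q > 1` there exist positive
non-increasing sequences whose alternating sum of `q`-th powers vanishes while the
alternating sum of products is positive, so the Hölder quotient has no positive lower bound. -/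
theorem alternating_holder_no_lower_bound (n : ℕ) (hn : 2 ≤ n) (hne : Even n)
    (q : ℝ) (hq : 1 < q) :
    ∃ a b : ℕ → ℝ,
      (∀ k, 1 ≤ k → k ≤ n → 0 < a k) ∧
      (∀ k, 1 ≤ k → k ≤ n → 0 < b k) ∧
      (∀ k, 1 ≤ k → k < n → a (k + 1) ≤ a k) ∧
      (∀ k, 1 ≤ k → k < n → b (k + 1) ≤ b k) ∧
      (∑ k ∈ Finset.Icc 1 n, (-1 : ℝ) ^ (k + 1) * a k ^ q = 0) ∧
      (0 < ∑ k ∈ Finset.Icc 1 n, (-1 : ℝ) ^ (k + 1) * (a k * b k)) :=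
  alternating_holder_no_lower_bound_general n hn hne q
end

section
/- Let r and R be positive integers with r ≤ R, let n ≥ 0, and let (x_k)_{k=1}^{2n+1} be a non-increasing sequence with 0 < x ≤ x_k ≤ X < ∞ for all k. Then (∑_{k=1}^{2n+1} (-1)^{k+1} x_k^R)^{1/R} ≤ (1/x) · (1 + X^R)^{1/r} · (∑_{k=1}^{2n+1} (-1)^{k+1} x_k^r)^{1/r}. -/
/-!
An alternating sum `c₁ - c₂ + ⋯ + c_{2n+1}` of a non-increasing sequence lies between its last
and its first term. Hence the left-hand side is at most `x₁ ≤ X`, while the last factor on the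
right is at least `x_{2n+1} ≥ x`, so the right-hand side is at least `(1 + X ^ R) ^ (1 / r)`,
which dominates `X` because `X ^ r ≤ 1 + X ^ R` for `r ≤ R`.
-/

open Finset

section AlternatingSum

variable {α : Type*} [CommRing α]

lemma sum_Icc_alternating_two_mul_add_three (c : ℕ → α) (n : ℕ) :
    ∑ k ∈ Icc 1 (2 * (n + 1) + 1), (-1 : α) ^ (k + 1) * c k =
      ∑ k ∈ Icc 1 (2 * n + 1), (-1 : α) ^ (k + 1) * c k - c (2 * n + 2) + c (2 * n + 3) := by
  rw [show 2 * (n + 1) + 1 = 2 * n + 1 + 1 + 1 by ring, sum_Icc_succ_top (by omega),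
    sum_Icc_succ_top (by omega), Odd.neg_one_pow ⟨n + 1, by ring⟩,
    Even.neg_one_pow ⟨n + 2, by ring⟩]
  ring

variable [LinearOrder α] [IsStrictOrderedRing α]

lemma sum_Icc_alternating_mem_Icc_of_antitone (c : ℕ → α) (n : ℕ)
    (hc : ∀ k, 1 ≤ k → k < 2 * n + 1 → c (k + 1) ≤ c k) :
    c (2 * n + 1) ≤ ∑ k ∈ Icc 1 (2 * n + 1), (-1 : α) ^ (k + 1) * c k ∧
      ∑ k ∈ Icc 1 (2 * n + 1), (-1 : α) ^ (k + 1) * c k ≤ c 1 := by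
  induction n with
  | zero => simp
  | succ n ih =>
    obtain ⟨hlast, hfirst⟩ := ih fun k hk hkn => hc k hk (by omega)
    have h₁ : c (2 * n + 2) ≤ c (2 * n + 1) := hc (2 * n + 1) (by omega) (by omega)
    have h₂ : c (2 * n + 3) ≤ c (2 * n + 2) := hc (2 * n + 2) (by omega) (by omega)
    rw [sum_Icc_alternating_two_mul_add_three, show 2 * (n + 1) + 1 = 2 * n + 3 by ring]
    constructor <;> linarith

end AlternatingSum

lemma sum_Icc_alternating_pow_rpow_inv_mem_Icc (x : ℕ → ℝ) (n m : ℕ) (hm : 0 < m)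
    (hx_nonneg : ∀ k, 1 ≤ k → k ≤ 2 * n + 1 → 0 ≤ x k)
    (hx_mono : ∀ k, 1 ≤ k → k < 2 * n + 1 → x (k + 1) ≤ x k) :
    x (2 * n + 1) ≤ (∑ k ∈ Icc 1 (2 * n + 1), (-1 : ℝ) ^ (k + 1) * x k ^ m) ^ (m : ℝ)⁻¹ ∧
      (∑ k ∈ Icc 1 (2 * n + 1), (-1 : ℝ) ^ (k + 1) * x k ^ m) ^ (m : ℝ)⁻¹ ≤ x 1 := by
  obtain ⟨hlast, hfirst⟩ := sum_Icc_alternating_mem_Icc_of_antitone (x · ^ m) n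
    fun k hk hkn => pow_le_pow_left₀ (hx_nonneg (k + 1) (by omega) hkn) (hx_mono k hk hkn) m
  have hx_last : 0 ≤ x (2 * n + 1) := hx_nonneg _ (by omega) le_rfl
  have hS := (pow_nonneg hx_last m).trans hlast
  have hm' : (0 : ℝ) < m := by exact_mod_cast hm
  constructor
  · rw [Real.le_rpow_inv_iff_of_pos hx_last hS hm', Real.rpow_natCast]
    exact hlast
  · rw [Real.rpow_inv_le_iff_of_pos hS (hx_nonneg 1 le_rfl (by omega)) hm', Real.rpow_natCast]
    exact hfirst

lemma pow_le_one_add_pow {a : ℝ} (ha : 0 ≤ a) {m n : ℕ} (hmn : m ≤ n) : a ^ m ≤ 1 + a ^ n := by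
  rcases le_total a 1 with ha₁ | ha₁
  · linarith [pow_le_one₀ ha ha₁ (n := m), pow_nonneg ha n]
  · linarith [pow_le_pow_right₀ ha₁ hmn]

lemma le_one_add_pow_rpow_inv {a : ℝ} (ha : 0 ≤ a) {m n : ℕ} (hm : 0 < m) (hmn : m ≤ n) :
    a ≤ (1 + a ^ n) ^ (m : ℝ)⁻¹ := by
  rw [Real.le_rpow_inv_iff_of_pos ha (by positivity) (by exact_mod_cast hm), Real.rpow_natCast]
  exact pow_le_one_add_pow ha hmn

/-- The right-hand inequality in (geom) of the paper. -/
theorem alternating_power_mean_upper (r R : ℕ) (hr : 0 < r) (hrR : r ≤ R) (n : ℕ)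
    (x : ℕ → ℝ) (xl X : ℝ) (hxl : 0 < xl)
    (hx_mono : ∀ k, 1 ≤ k → k < 2 * n + 1 → x (k + 1) ≤ x k)
    (hx_bdd : ∀ k, 1 ≤ k → k ≤ 2 * n + 1 → xl ≤ x k ∧ x k ≤ X) :
    (∑ k ∈ Finset.Icc 1 (2 * n + 1), (-1 : ℝ) ^ (k + 1) * x k ^ R) ^ (1 / (R : ℝ)) ≤
      (1 / xl) * (1 + X ^ R) ^ (1 / (r : ℝ)) *
        (∑ k ∈ Finset.Icc 1 (2 * n + 1), (-1 : ℝ) ^ (k + 1) * x k ^ r) ^ (1 / (r : ℝ)) := by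
  have hx_nonneg k (hk : 1 ≤ k) (hkn : k ≤ 2 * n + 1) : 0 ≤ x k :=
    hxl.le.trans (hx_bdd k hk hkn).1
  have hx₁X : x 1 ≤ X := (hx_bdd 1 le_rfl (by omega)).2
  have hxl_last : xl ≤ x (2 * n + 1) := (hx_bdd (2 * n + 1) (by omega) le_rfl).1
  have hX : 0 ≤ X := (hx_nonneg 1 le_rfl (by omega)).trans hx₁X
  obtain ⟨-, hR_first⟩ :=
    sum_Icc_alternating_pow_rpow_inv_mem_Icc x n R (hr.trans_le hrR) hx_nonneg hx_mono
  obtain ⟨hr_last, -⟩ := sum_Icc_alternating_pow_rpow_inv_mem_Icc x n r hr hx_nonneg hx_mono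
  simp only [one_div]
  calc _ ≤ X := hR_first.trans hx₁X
    _ ≤ (1 + X ^ R) ^ (r : ℝ)⁻¹ := le_one_add_pow_rpow_inv hX hr hrR
    _ = xl⁻¹ * (1 + X ^ R) ^ (r : ℝ)⁻¹ * xl := by field_simp
    _ ≤ _ := by gcongr; exact hxl_last.trans hr_last
end

section
/- Let n ≥ 1, let p ≥ 1, and let (a_k)_{k=1}^n and (b_k)_{k=1}^n be non-negative non-increasing sequences of real numbers. Then ∑_{k=1}^n (-1)^{k+1} (a_k^p + b_k^p) ≤ ∑_{k=1}^n (-1)^{k+1} (a_k + b_k)^p. -/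
/-!
The defect `D(x, y) = (x + y)^p - x^p - y^p` is non-negative and, because `t ↦ t^p` is convex on
`[0, ∞)` and convex functions have non-decreasing increments `f (x + c) - f x`, non-decreasing in
each variable. So `k ↦ D(a_k, b_k)` is a non-negative non-increasing sequence, and the difference
of the two sides is its alternating sum, which is non-negative after grouping consecutive terms
in pairs.
-/

open Finset

section

variable {𝕜 β : Type*} [Field 𝕜] [LinearOrder 𝕜] [IsStrictOrderedRing 𝕜]
  [AddCommGroup β] [PartialOrder β] [IsOrderedAddMonoid β] [Module 𝕜 β]
  {s : Set 𝕜} {f : 𝕜 → β}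

theorem ConvexOn.map_add_sub_map_le (hf : ConvexOn 𝕜 s f) {x y c : 𝕜} (hx : x ∈ s)
    (hyc : y + c ∈ s) (hxy : x ≤ y) (hc : 0 ≤ c) :
    f (x + c) - f x ≤ f (y + c) - f y := by
  obtain rfl | hc := hc.eq_or_lt
  · simp only [add_zero, sub_self, le_refl]
  obtain rfl | hxy := hxy.eq_or_lt
  · rfl
  rw [sub_le_sub_iff, add_comm (f (y + c))]
  -- `x + c` and `y` are the convex combinations of `x` and `y + c` with weights `(l, m)`, `(m, l)`.
  have hd : 0 < y - x := sub_pos.mpr hxy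
  set l := (y - x) / (c + (y - x)) with hl
  set m := c / (c + (y - x)) with hm
  have hlm : l + m = 1 := by rw [hl, hm]; field_simp; ring
  have h₁ := hf.2 hx hyc (by positivity : 0 ≤ l) (by positivity : 0 ≤ m) hlm
  have h₂ := hf.2 hx hyc (by positivity : 0 ≤ m) (by positivity : 0 ≤ l) (by rw [add_comm, hlm])
  have e₁ : l • x + m • (y + c) = x + c := by
    rw [hl, hm, smul_eq_mul, smul_eq_mul]; field_simp; ring
  have e₂ : m • x + l • (y + c) = y := by
    rw [hl, hm, smul_eq_mul, smul_eq_mul]; field_simp; ring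
  rw [e₁] at h₁
  rw [e₂] at h₂
  calc f (x + c) + f y ≤ _ := add_le_add h₁ h₂
    _ = f x + f (y + c) := by
      rw [add_add_add_comm, ← add_smul, ← add_smul, add_comm m, hlm, one_smul, one_smul]

theorem ConvexOn.map_add_sub_map_sub_map_le (hf : ConvexOn 𝕜 (Set.Ici 0) f) {x x' y y' : 𝕜}
    (hx' : 0 ≤ x') (hxx' : x' ≤ x) (hy' : 0 ≤ y') (hyy' : y' ≤ y) :
    f (x' + y') - f x' - f y' ≤ f (x + y) - f x - f y := by
  have hx : 0 ≤ x := hx'.trans hxx'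
  calc f (x' + y') - f x' - f y' ≤ f (x + y') - f x - f y' :=
        sub_le_sub_right (hf.map_add_sub_map_le hx' (add_nonneg hx hy') hxx' hy') _
    _ = f (y' + x) - f y' - f x := by rw [add_comm y', sub_right_comm]
    _ ≤ f (y + x) - f y - f x :=
        sub_le_sub_right (hf.map_add_sub_map_le hy' (add_nonneg (hy'.trans hyy') hx) hyy' hx) _
    _ = f (x + y) - f x - f y := by rw [add_comm y, sub_right_comm]

end

theorem alternating_sum_nonneg {R : Type*} [Ring R] [PartialOrder R] [IsOrderedRing R]
    {c : ℕ → R} {n : ℕ} (hc : ∀ i < n, 0 ≤ c i) (hc_anti : ∀ i, i + 1 < n → c (i + 1) ≤ c i) :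
    0 ≤ ∑ i ∈ range n, (-1) ^ i * c i := by
  induction n using Nat.twoStepInduction generalizing c with
  | zero => simp
  | one => simpa using hc 0 one_pos
  | more n ih _ =>
    have hpair : 0 ≤ c 0 - c 1 := sub_nonneg.mpr (hc_anti 0 (by omega))
    have htail := ih (c := fun i => c (i + 2)) (fun i hi => hc _ (by omega))
      (fun i hi => hc_anti _ (by omega))
    have hsplit : ∑ i ∈ range (n + 2), (-1) ^ i * c i =
        ∑ i ∈ range n, (-1) ^ i * c (i + 2) + (c 0 - c 1) := by
      rw [sum_range_succ', sum_range_succ']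
      simp [pow_succ]
      abel
    exact hsplit ▸ add_nonneg htail hpair

theorem alternating_superadditive_general (n : ℕ) (p : ℝ) (hp : 1 ≤ p)
    (a b : ℕ → ℝ)
    (ha_nonneg : ∀ k, 1 ≤ k → k ≤ n → 0 ≤ a k)
    (hb_nonneg : ∀ k, 1 ≤ k → k ≤ n → 0 ≤ b k)
    (ha_mono : ∀ k, 1 ≤ k → k < n → a (k + 1) ≤ a k)
    (hb_mono : ∀ k, 1 ≤ k → k < n → b (k + 1) ≤ b k) :
    ∑ k ∈ Finset.Icc 1 n, (-1 : ℝ) ^ (k + 1) * (a k ^ p + b k ^ p) ≤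
      ∑ k ∈ Finset.Icc 1 n, (-1 : ℝ) ^ (k + 1) * (a k + b k) ^ p := by
  set D : ℕ → ℝ := fun k => (a k + b k) ^ p - a k ^ p - b k ^ p
  have hshift : ∑ k ∈ Icc 1 n, (-1 : ℝ) ^ (k + 1) * D k =
      ∑ i ∈ range n, (-1 : ℝ) ^ i * D (i + 1) := by
    rw [← Ico_add_one_right_eq_Icc, ← zero_add 1, ← sum_Ico_add', ← range_eq_Ico]
    simp [pow_succ]
  have hD : 0 ≤ ∑ k ∈ Icc 1 n, (-1 : ℝ) ^ (k + 1) * D k := by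
    rw [hshift]
    refine alternating_sum_nonneg (fun i hi => ?_) (fun i hi => ?_)
    · simp only [D, sub_sub, sub_nonneg]
      exact Real.add_rpow_le_rpow_add (ha_nonneg _ (by omega) (by omega))
        (hb_nonneg _ (by omega) (by omega)) hp
    · exact (convexOn_rpow hp).map_add_sub_map_sub_map_le (ha_nonneg _ (by omega) (by omega))
        (ha_mono _ (by omega) (by omega)) (hb_nonneg _ (by omega) (by omega))
        (hb_mono _ (by omega) (by omega))
  rw [← sub_nonneg, ← sum_sub_distrib]
  simpa only [D, ← mul_sub, sub_sub] using hD

/-- Inequality (ineq22) of the paper: alternating superadditivity of `t ↦ t^p`, `p ≥ 1`,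
for non-negative non-increasing sequences. -/
theorem alternating_superadditive (n : ℕ) (hn : 1 ≤ n) (p : ℝ) (hp : 1 ≤ p)
    (a b : ℕ → ℝ)
    (ha_nonneg : ∀ k, 1 ≤ k → k ≤ n → 0 ≤ a k)
    (hb_nonneg : ∀ k, 1 ≤ k → k ≤ n → 0 ≤ b k)
    (ha_mono : ∀ k, 1 ≤ k → k < n → a (k + 1) ≤ a k)
    (hb_mono : ∀ k, 1 ≤ k → k < n → b (k + 1) ≤ b k) :
    ∑ k ∈ Finset.Icc 1 n, (-1 : ℝ) ^ (k + 1) * (a k ^ p + b k ^ p) ≤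
      ∑ k ∈ Finset.Icc 1 n, (-1 : ℝ) ^ (k + 1) * (a k + b k) ^ p :=
  alternating_superadditive_general n p hp a b ha_nonneg hb_nonneg ha_mono hb_mono
end

section
/- Let n ≥ 1, let 0 < p < 1, and let (a_k)_{k=1}^n and (b_k)_{k=1}^n be non-negative non-increasing sequences of real numbers. Then ∑_{k=1}^n (-1)^{k+1} (a_k + b_k)^p ≤ ∑_{k=1}^n (-1)^{k+1} (a_k^p + b_k^p). -/
/-!
The defect `c k = a k ^ p + b k ^ p - (a k + b k) ^ p` is non-negative by subadditivity of
`t ↦ t ^ p`, and it is non-increasing in `k`: for a concave function the increment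
`f (y + h) - f y` decreases in `y`, so `f a + f b - f (a + b)` increases in each of `a` and `b`.
An alternating sum of a non-negative non-increasing sequence is non-negative, since its terms
pair up as `c 1 - c 2 ≥ 0`, `c 3 - c 4 ≥ 0`, ….
-/

open Finset

section Concave

variable {𝕜 : Type*} [Field 𝕜] [LinearOrder 𝕜] [IsStrictOrderedRing 𝕜] {f : 𝕜 → 𝕜}

theorem ConcaveOn.map_add_sub_map_le_of_le {s : Set 𝕜} (hf : ConcaveOn 𝕜 s f) {x y h : 𝕜}
    (hx : x ∈ s) (hyh : y + h ∈ s) (hxy : x ≤ y) (hh : 0 ≤ h) :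
    f (y + h) - f y ≤ f (x + h) - f x := by
  rcases (show 0 ≤ y + h - x by linarith).eq_or_lt with hD | hD
  · obtain rfl : y = x := by linarith
    obtain rfl : h = 0 := by linarith
    simp
  -- `y` and `x + h` are the convex combinations of `x` and `y + h` with swapped weights
  have hD' := hD.ne'
  have ht : 0 ≤ h / (y + h - x) := div_nonneg hh hD.le
  have hu : 0 ≤ (y - x) / (y + h - x) := div_nonneg (sub_nonneg.2 hxy) hD.le
  have htu : h / (y + h - x) + (y - x) / (y + h - x) = 1 := by field_simp; ring
  have hut : (y - x) / (y + h - x) + h / (y + h - x) = 1 := by rw [add_comm, htu]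
  have ey : h / (y + h - x) * x + (y - x) / (y + h - x) * (y + h) = y := by field_simp; ring
  have exh : (y - x) / (y + h - x) * x + h / (y + h - x) * (y + h) = x + h := by
    field_simp; ring
  have hy := hf.2 hx hyh ht hu htu
  have hxh := hf.2 hx hyh hu ht hut
  simp only [smul_eq_mul, ey, exh] at hy hxh
  linear_combination hy + hxh - (f x + f (y + h)) * htu

theorem ConcaveOn.map_add_map_sub_map_add_le (hf : ConcaveOn 𝕜 (Set.Ici 0) f)
    {a b a' b' : 𝕜} (ha' : 0 ≤ a') (hb' : 0 ≤ b') (ha : a' ≤ a) (hb : b' ≤ b) :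
    f a' + f b' - f (a' + b') ≤ f a + f b - f (a + b) := by
  have hbstep := hf.map_add_sub_map_le_of_le ha' (Set.mem_Ici.2 (by linarith)) ha (hb'.trans hb)
  have hastep := hf.map_add_sub_map_le_of_le hb' (Set.mem_Ici.2 (by linarith)) hb ha'
  rw [add_comm b, add_comm b'] at hastep
  linarith

end Concave

section Alternating

variable {R : Type*} [Ring R] [PartialOrder R] [IsOrderedRing R]

theorem alternating_sum_range_nonneg :
    ∀ {n : ℕ} {f : ℕ → R}, (∀ i < n, 0 ≤ f i) → (∀ i, i + 1 < n → f (i + 1) ≤ f i) →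
      0 ≤ ∑ i ∈ range n, (-1) ^ i * f i
  | 0, _, _, _ => by simp
  | 1, _, hf0, _ => by simpa using hf0 0 one_pos
  | n + 2, f, hf0, hf => by
    have htail : 0 ≤ ∑ i ∈ range n, (-1) ^ i * f (i + 2) :=
      alternating_sum_range_nonneg (fun i hi => hf0 _ (by omega)) (fun i hi => hf _ (by omega))
    have hhead : 0 ≤ f 0 - f 1 := sub_nonneg.2 (hf 0 (by omega))
    rw [sum_range_succ', sum_range_succ']
    simp only [pow_succ, pow_zero, neg_one_mul, neg_neg, mul_neg, mul_one, one_mul, zero_add]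
    rw [add_assoc, neg_add_eq_sub]
    exact add_nonneg htail hhead

theorem alternating_sum_Icc_nonneg {n : ℕ} {f : ℕ → R} (hf0 : ∀ k, 1 ≤ k → k ≤ n → 0 ≤ f k)
    (hf : ∀ k, 1 ≤ k → k < n → f (k + 1) ≤ f k) :
    0 ≤ ∑ k ∈ Icc 1 n, (-1) ^ (k + 1) * f k := by
  rw [← Ico_add_one_right_eq_Icc, sum_Ico_eq_sum_range, Nat.add_sub_cancel]
  simp only [show ∀ k, 1 + k + 1 = k + 2 by omega, pow_add, neg_one_sq, mul_one]
  exact alternating_sum_range_nonneg (fun i hi => hf0 _ (by omega) (by omega))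
    (fun i hi => by simpa only [add_comm, add_left_comm] using hf (1 + i) (by omega) (by omega))

end Alternating

theorem alternating_subadditive_general (n : ℕ) (p : ℝ) (hp0 : 0 < p) (hp1 : p < 1)
    (a b : ℕ → ℝ)
    (ha_nonneg : ∀ k, 1 ≤ k → k ≤ n → 0 ≤ a k)
    (hb_nonneg : ∀ k, 1 ≤ k → k ≤ n → 0 ≤ b k)
    (ha_mono : ∀ k, 1 ≤ k → k < n → a (k + 1) ≤ a k)
    (hb_mono : ∀ k, 1 ≤ k → k < n → b (k + 1) ≤ b k) :
    ∑ k ∈ Finset.Icc 1 n, (-1 : ℝ) ^ (k + 1) * (a k + b k) ^ p ≤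
      ∑ k ∈ Finset.Icc 1 n, (-1 : ℝ) ^ (k + 1) * (a k ^ p + b k ^ p) := by
  have hconcave := Real.concaveOn_rpow hp0.le hp1.le
  have hdefect : 0 ≤ ∑ k ∈ Icc 1 n, (-1 : ℝ) ^ (k + 1) * (a k ^ p + b k ^ p - (a k + b k) ^ p) :=
    alternating_sum_Icc_nonneg
      (fun k hk1 hkn => sub_nonneg.2 <|
        Real.rpow_add_le_add_rpow (ha_nonneg k hk1 hkn) (hb_nonneg k hk1 hkn) hp0.le hp1.le)
      (fun k hk1 hkn => hconcave.map_add_map_sub_map_add_le (ha_nonneg (k + 1) (by omega) hkn)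
        (hb_nonneg (k + 1) (by omega) hkn) (ha_mono k hk1 hkn) (hb_mono k hk1 hkn))
  rw [← sub_nonneg, ← sum_sub_distrib]
  simpa only [mul_sub] using hdefect

/-- The reverse of inequality (ineq22) of the paper for `0 < p < 1`: alternating
subadditivity of `t ↦ t^p` for non-negative non-increasing sequences. -/
theorem alternating_subadditive (n : ℕ) (hn : 1 ≤ n) (p : ℝ) (hp0 : 0 < p) (hp1 : p < 1)
    (a b : ℕ → ℝ)
    (ha_nonneg : ∀ k, 1 ≤ k → k ≤ n → 0 ≤ a k)
    (hb_nonneg : ∀ k, 1 ≤ k → k ≤ n → 0 ≤ b k)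
    (ha_mono : ∀ k, 1 ≤ k → k < n → a (k + 1) ≤ a k)
    (hb_mono : ∀ k, 1 ≤ k → k < n → b (k + 1) ≤ b k) :
    ∑ k ∈ Finset.Icc 1 n, (-1 : ℝ) ^ (k + 1) * (a k + b k) ^ p ≤
      ∑ k ∈ Finset.Icc 1 n, (-1 : ℝ) ^ (k + 1) * (a k ^ p + b k ^ p) :=
  alternating_subadditive_general n p hp0 hp1 a b ha_nonneg hb_nonneg ha_mono hb_mono
end

section
/- For all real x, y ≥ 0 and p ≥ 1, the function f(x, y) = (x + y)^p − (x^p + y^p) is non-decreasing in each variable separately; that is, if 0 ≤ x' ≤ x and 0 ≤ y' ≤ y then (x' + y')^p − (x'^p + y'^p) ≤ (x + y)^p − (x^p + y^p). -/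
open Set

/-- Both `a + c` and `b` lie on the segment `[a, b + c]`, at mirror-image positions, so the two
convexity inequalities add up to `f (a + c) + f b ≤ f a + f (b + c)`. -/
theorem ConvexOn.map_add_sub_map_le_s12 {𝕜 β : Type*} [Field 𝕜] [LinearOrder 𝕜] [IsStrictOrderedRing 𝕜]
    [AddCommGroup β] [PartialOrder β] [IsOrderedAddMonoid β] [Module 𝕜 β]
    {s : Set 𝕜} {f : 𝕜 → β} (hf : ConvexOn 𝕜 s f) {a b c : 𝕜} (ha : a ∈ s) (hbc : b + c ∈ s)
    (hab : a ≤ b) (hc : 0 ≤ c) :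
    f (a + c) - f a ≤ f (b + c) - f b := by
  rcases (add_nonneg (sub_nonneg.2 hab) hc).eq_or_lt with hd | hd
  · obtain ⟨rfl, rfl⟩ : b = a ∧ c = 0 := by constructor <;> linarith
    rfl
  set d := b - a + c
  have hsum : (b - a) / d + c / d = 1 := by rw [← add_div, div_self hd.ne']
  have hwa : 0 ≤ (b - a) / d := div_nonneg (sub_nonneg.2 hab) hd.le
  have hwc : 0 ≤ c / d := div_nonneg hc hd.le
  have hleft : f (a + c) ≤ ((b - a) / d) • f a + (c / d) • f (b + c) := by
    convert hf.2 ha hbc hwa hwc hsum using 2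
    simp only [smul_eq_mul]; field_simp; ring
  have hright : f b ≤ (c / d) • f a + ((b - a) / d) • f (b + c) := by
    convert hf.2 ha hbc hwc hwa (by rw [add_comm, hsum]) using 2
    simp only [smul_eq_mul]; field_simp; ring
  refine sub_le_sub_iff.2 ?_
  calc f (a + c) + f b
      ≤ ((b - a) / d + c / d) • f a + ((b - a) / d + c / d) • f (b + c) := by
        rw [add_smul, add_smul]
        convert add_le_add hleft hright using 1
        abel
    _ = f (b + c) + f a := by rw [hsum, one_smul, one_smul, add_comm]

/-- The function `f(x, y) = (x + y)^p - (x^p + y^p)`, `p ≥ 1`, is non-decreasing in each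
variable on non-negative reals. -/
theorem rpow_add_sub_monotone (p x y x' y' : ℝ) (hp : 1 ≤ p)
    (hx' : 0 ≤ x') (hx : x' ≤ x) (hy' : 0 ≤ y') (hy : y' ≤ y) :
    (x' + y') ^ p - (x' ^ p + y' ^ p) ≤ (x + y) ^ p - (x ^ p + y ^ p) := by
  have hconv := convexOn_rpow hp
  have hmono_x : (x' + y') ^ p - x' ^ p ≤ (x + y') ^ p - x ^ p :=
    hconv.map_add_sub_map_le_s12 hx' (by simp only [mem_Ici]; linarith) hx hy'
  have hmono_y : (y' + x) ^ p - y' ^ p ≤ (y + x) ^ p - y ^ p :=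
    hconv.map_add_sub_map_le_s12 hy' (by simp only [mem_Ici]; linarith) hy (hx'.trans hx)
  rw [add_comm y' x, add_comm y x] at hmono_y
  linarith
end

section
/- For every p ≥ 1 and every ε > 0 there exist n ≥ 1 and non-negative non-increasing sequences (a_k)_{k=1}^n, (b_k)_{k=1}^n with ∑_{k=1}^n (-1)^{k+1} (a_k + b_k)^p > 0 such that ((∑_{k=1}^n (-1)^{k+1} a_k^p)^{1/p} + (∑_{k=1}^n (-1)^{k+1} b_k^p)^{1/p}) / (∑_{k=1}^n (-1)^{k+1} (a_k + b_k)^p)^{1/p} > 2^{1 − 1/p} − ε. Hence the constant 2^{1 − 1/p} in the alternating Minkowski-type inequality is best possible. -/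
open Real Finset

/-!
Take `a = (1, u, 0)` and `b = (z, z, z)` with `u = 1 - z ^ p / p` and `z` small. The tangent-line
bounds for `t ↦ t ^ p` at `u` and at `1 + z` give, up to factors `1 + O(z)`, the alternating sums
`1 - u ^ p ≈ p (1 - u) = z ^ p`, `z ^ p` and `(1 + z) ^ p - (u + z) ^ p + z ^ p ≈ 2 z ^ p`, so the
ratio is `≈ 2 z / (2 ^ (1 / p) z) = 2 ^ (1 - 1 / p)`.
-/

theorem rpow_add_mul_rpow_sub_one_mul_sub_le {p x y : ℝ} (hp : 1 ≤ p) (hx : 0 < x)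
    (hy : 0 ≤ y) :
    x ^ p + p * x ^ (p - 1) * (y - x) ≤ y ^ p := by
  have hbern := one_add_mul_self_le_rpow_one_add
    (by have := div_nonneg hy hx.le; linarith : -1 ≤ y / x - 1) hp
  rw [add_sub_cancel, div_rpow hy hx.le, le_div_iff₀ (rpow_pos_of_pos hx p)] at hbern
  calc x ^ p + p * x ^ (p - 1) * (y - x) = (1 + p * (y / x - 1)) * x ^ p := by
        rw [rpow_sub_one hx.ne']; field_simp
    _ ≤ y ^ p := hbern

theorem sum_Icc_one_three_neg_one_pow_mul (f : ℕ → ℝ) :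
    ∑ k ∈ Icc 1 3, (-1 : ℝ) ^ (k + 1) * f k = f 1 - f 2 + f 3 := by
  rw [sum_Icc_succ_top (by norm_num), sum_Icc_succ_top (by norm_num), Icc_self, sum_singleton]
  norm_num
  ring

theorem one_sub_rpow_div_mem_Icc {p z : ℝ} (hp : 1 ≤ p) (hz : 0 < z) (hz1 : z ≤ 1) :
    1 - z ^ p / p ∈ Set.Icc (1 - z) 1 := by
  have hzp : 0 ≤ z ^ p := rpow_nonneg hz.le p
  have : z ^ p / p ≤ z :=
    calc z ^ p / p ≤ z ^ p := div_le_self hzp hp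
      _ ≤ z ^ (1 : ℝ) := rpow_le_rpow_of_exponent_ge hz hz1 hp
      _ = z := rpow_one z
  have : 0 ≤ z ^ p / p := div_nonneg hzp (by linarith)
  constructor <;> linarith

theorem one_sub_mul_le_one_sub_rpow_rpow_inv {p z : ℝ} (hp : 1 ≤ p) (hz : 0 < z) (hz1 : z < 1) :
    (1 - z) * z ≤ (1 - (1 - z ^ p / p) ^ p) ^ p⁻¹ := by
  obtain ⟨hu_lo, hu1⟩ := one_sub_rpow_div_mem_Icc hp hz hz1.le
  set u := 1 - z ^ p / p
  have hu0 : 0 < u := by linarith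
  have htangent := rpow_add_mul_rpow_sub_one_mul_sub_le hp hu0 zero_le_one
  have hpu : p * (1 - u) = z ^ p := by simp only [u, sub_sub_cancel]; field_simp
  have hpow : (u * z) ^ p ≤ 1 - u ^ p :=
    calc (u * z) ^ p = u ^ p * z ^ p := mul_rpow hu0.le hz.le
      _ ≤ u ^ (p - 1) * z ^ p := mul_le_mul_of_nonneg_right
          (rpow_le_rpow_of_exponent_ge hu0 hu1 (by linarith)) (rpow_nonneg hz.le p)
      _ = p * u ^ (p - 1) * (1 - u) := by rw [← hpu]; ring
      _ ≤ 1 - u ^ p := by rw [one_rpow] at htangent; linarith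
  calc (1 - z) * z ≤ u * z := by gcongr
    _ ≤ (1 - u ^ p) ^ p⁻¹ := by
        rwa [le_rpow_inv_iff_of_pos (by positivity) ((rpow_nonneg (by positivity) p).trans hpow)
          (by linarith)]

theorem rpow_sub_rpow_add_rpow_pos {p z u : ℝ} (hp : 0 ≤ p) (hz : 0 < z) (hu : 0 ≤ u)
    (hu1 : u ≤ 1) :
    0 < (1 + z) ^ p - (u + z) ^ p + z ^ p := by
  have : (u + z) ^ p ≤ (1 + z) ^ p := rpow_le_rpow (by positivity) (by linarith) hp
  have : 0 < z ^ p := rpow_pos_of_pos hz p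
  linarith

theorem rpow_sub_rpow_add_rpow_rpow_inv_le {p z : ℝ} (hp : 1 ≤ p) (hz : 0 < z) (hz1 : z < 1) :
    ((1 + z) ^ p - (1 - z ^ p / p + z) ^ p + z ^ p) ^ p⁻¹ ≤ 2 ^ p⁻¹ * ((1 + z) * z) := by
  obtain ⟨hu_lo, hu1⟩ := one_sub_rpow_div_mem_Icc hp hz hz1.le
  set u := 1 - z ^ p / p
  have hu0 : 0 < u := by linarith
  have htangent := rpow_add_mul_rpow_sub_one_mul_sub_le hp (by linarith : 0 < 1 + z)
    (by linarith : 0 ≤ u + z)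
  have hpu : p * (1 - u) = z ^ p := by simp only [u, sub_sub_cancel]; field_simp
  have hz1p : z ^ p ≤ (1 + z) ^ p * z ^ p :=
    le_mul_of_one_le_left (rpow_nonneg hz.le p) (one_le_rpow (by linarith) (by linarith))
  have hdiff : (1 + z) ^ p - (u + z) ^ p ≤ (1 + z) ^ p * z ^ p :=
    calc (1 + z) ^ p - (u + z) ^ p ≤ p * (1 + z) ^ (p - 1) * (1 - u) := by linarith
      _ = (1 + z) ^ (p - 1) * z ^ p := by rw [← hpu]; ring
      _ ≤ (1 + z) ^ p * z ^ p := mul_le_mul_of_nonneg_right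
          (rpow_le_rpow_of_exponent_le (by linarith) (by linarith)) (rpow_nonneg hz.le p)
  rw [rpow_inv_le_iff_of_pos (rpow_sub_rpow_add_rpow_pos (by linarith) hz hu0.le hu1).le
    (by positivity) (by linarith), mul_rpow (by positivity) (by positivity),
    rpow_inv_rpow zero_le_two (by linarith), mul_rpow (by linarith) hz.le]
  linarith

theorem two_div_sub_lt_div {c z ε : ℝ} (hc : 1 ≤ c) (hz : 0 < z) (hzε : 3 * z < ε) :
    2 / c - ε < (2 - z) / (c * (1 + z)) := by
  have hgap : 2 / c - (2 - z) / (c * (1 + z)) = 3 * z / (c * (1 + z)) := by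
    field_simp; ring
  have : 3 * z / (c * (1 + z)) ≤ 3 * z :=
    div_le_self (by linarith) (by nlinarith)
  linarith

/-- Sharpness of the constant `2^(1 - 1/p)` in the alternating Minkowski-type
inequality. -/
theorem alternating_minkowski_sharp (p : ℝ) (hp : 1 ≤ p) (ε : ℝ) (hε : 0 < ε) :
    ∃ n : ℕ, 1 ≤ n ∧ ∃ a b : ℕ → ℝ,
      (∀ k, 1 ≤ k → k ≤ n → 0 ≤ a k) ∧
      (∀ k, 1 ≤ k → k ≤ n → 0 ≤ b k) ∧
      (∀ k, 1 ≤ k → k < n → a (k + 1) ≤ a k) ∧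
      (∀ k, 1 ≤ k → k < n → b (k + 1) ≤ b k) ∧
      0 < ∑ k ∈ Finset.Icc 1 n, (-1 : ℝ) ^ (k + 1) * (a k + b k) ^ p ∧
      (2 : ℝ) ^ (1 - 1 / p) - ε <
        ((∑ k ∈ Finset.Icc 1 n, (-1 : ℝ) ^ (k + 1) * a k ^ p) ^ (1 / p) +
            (∑ k ∈ Finset.Icc 1 n, (-1 : ℝ) ^ (k + 1) * b k ^ p) ^ (1 / p)) /
          (∑ k ∈ Finset.Icc 1 n, (-1 : ℝ) ^ (k + 1) * (a k + b k) ^ p) ^ (1 / p) := by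
  have hp0 : 0 < p := by linarith
  obtain ⟨z, hz, hz1, hzε⟩ : ∃ z : ℝ, 0 < z ∧ z < 1 ∧ 3 * z < ε :=
    ⟨min (1 / 2) (ε / 4), by positivity, by linarith [min_le_left (1 / 2 : ℝ) (ε / 4)],
      by linarith [min_le_right (1 / 2 : ℝ) (ε / 4)]⟩
  obtain ⟨hu_lo, hu_hi⟩ := one_sub_rpow_div_mem_Icc hp hz hz1.le
  set u := 1 - z ^ p / p
  have hu0 : 0 ≤ u := by linarith
  refine ⟨3, by norm_num, fun k => if k = 1 then 1 else if k = 2 then u else 0, fun _ => z,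
    ?_, fun _ _ _ => hz.le, ?_, fun _ _ _ => le_rfl, ?_⟩
  · intro k h1 h3; interval_cases k <;> simp [hu0]
  · intro k h1 h3; interval_cases k <;> simp [hu0, hu_hi]
  simp only [sum_Icc_one_three_neg_one_pow_mul, ↓reduceIte, OfNat.ofNat_ne_one, Nat.succ_ne_self, zero_add,
    add_zero, sub_self, one_div, one_rpow, zero_rpow hp0.ne']
  refine ⟨rpow_sub_rpow_add_rpow_pos hp0.le hz hu0 hu_hi, ?_⟩
  have hc : 1 ≤ (2 : ℝ) ^ p⁻¹ := one_le_rpow one_le_two (by positivity)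
  rw [rpow_sub two_pos, rpow_one, rpow_rpow_inv hz.le hp0.ne']
  have hnum : (1 - z) * z + z ≤ (1 - u ^ p) ^ p⁻¹ + z := by
    gcongr; exact one_sub_mul_le_one_sub_rpow_rpow_inv hp hz hz1
  calc 2 / 2 ^ p⁻¹ - ε < (2 - z) / (2 ^ p⁻¹ * (1 + z)) := two_div_sub_lt_div hc hz hzε
    _ = ((1 - z) * z + z) / (2 ^ p⁻¹ * ((1 + z) * z)) := by field_simp; ring
    _ ≤ _ := div_le_div₀ (le_trans (by nlinarith) hnum) hnum
          (rpow_pos_of_pos (rpow_sub_rpow_add_rpow_pos hp0.le hz hu0 hu_hi) _)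
          (rpow_sub_rpow_add_rpow_rpow_inv_le hp hz hz1)
end

section
/- For every p > 1 and every ε > 0 there exist n ≥ 2 and non-negative non-increasing sequences (a_k)_{k=1}^n, (b_k)_{k=1}^n with ∑_{k=1}^n (-1)^{k+1} (a_k + b_k)^p > 0 such that ((∑_{k=1}^n (-1)^{k+1} a_k^p)^{1/p} + (∑_{k=1}^n (-1)^{k+1} b_k^p)^{1/p}) / (∑_{k=1}^n (-1)^{k+1} (a_k + b_k)^p)^{1/p} < ε. Hence the alternating Minkowski-type quotient admits no positive lower bound depending only on p. -/
/-!
Take `a = (1, 1)` and `b = (t, 0)`. The alternating sums of `a ^ p`, `b ^ p` and `(a + b) ^ p` are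
`0`, `t ^ p` and `(1 + t) ^ p - 1 > t`, so the quotient is less than
`t / t ^ (1 / p) = t ^ (1 - 1 / p)`, which tends to `0` with `t` because `p > 1`.
-/

open Real Finset

lemma sum_Icc_one_two_neg_one_pow_mul {R : Type*} [CommRing R] (f : ℕ → R) :
    ∑ k ∈ Icc 1 2, (-1 : R) ^ (k + 1) * f k = f 1 - f 2 := by
  rw [show Icc 1 2 = {1, 2} from rfl, sum_pair (by norm_num)]
  ring

lemma lt_one_add_rpow_sub_one {p t : ℝ} (hp : 1 < p) (ht : 0 < t) : t < (1 + t) ^ p - 1 := by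
  have h : (1 + t) ^ (1 : ℝ) < (1 + t) ^ p := rpow_lt_rpow_of_exponent_lt (by linarith) hp
  rw [rpow_one] at h
  linarith

lemma div_rpow_one_div_lt_rpow_one_sub {p t D : ℝ} (hp : 0 < p) (ht : 0 < t) (htD : t < D) :
    t / D ^ (1 / p) < t ^ (1 - 1 / p) := by
  rw [rpow_sub ht, rpow_one]
  exact div_lt_div_of_pos_left ht (rpow_pos_of_pos ht _)
    (rpow_lt_rpow ht.le htD (by positivity))

/-- The alternating Minkowski-type quotient admits no positive lower bound depending
only on `p`. -/
theorem alternating_minkowski_no_lower_bound (p : ℝ) (hp : 1 < p) (ε : ℝ) (hε : 0 < ε) :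
    ∃ n : ℕ, 2 ≤ n ∧ ∃ a b : ℕ → ℝ,
      (∀ k, 1 ≤ k → k ≤ n → 0 ≤ a k) ∧
      (∀ k, 1 ≤ k → k ≤ n → 0 ≤ b k) ∧
      (∀ k, 1 ≤ k → k < n → a (k + 1) ≤ a k) ∧
      (∀ k, 1 ≤ k → k < n → b (k + 1) ≤ b k) ∧
      0 < ∑ k ∈ Finset.Icc 1 n, (-1 : ℝ) ^ (k + 1) * (a k + b k) ^ p ∧
      ((∑ k ∈ Finset.Icc 1 n, (-1 : ℝ) ^ (k + 1) * a k ^ p) ^ (1 / p) +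
          (∑ k ∈ Finset.Icc 1 n, (-1 : ℝ) ^ (k + 1) * b k ^ p) ^ (1 / p)) /
        (∑ k ∈ Finset.Icc 1 n, (-1 : ℝ) ^ (k + 1) * (a k + b k) ^ p) ^ (1 / p) < ε := by
  have hp0 : 0 < p := by linarith
  have hq : 0 < 1 - 1 / p := by rw [sub_pos, div_lt_one hp0]; exact hp
  set t := ε ^ (1 - 1 / p)⁻¹
  have ht : 0 < t := rpow_pos_of_pos hε _
  have hD := lt_one_add_rpow_sub_one hp ht
  refine ⟨2, le_rfl, fun _ => 1, fun k => if k = 1 then t else 0, by simp, ?_, by simp, ?_, ?_,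
    ?_⟩
  · intro k _ _
    positivity
  · intro k hk1 hk2
    interval_cases k
    simp [ht.le]
  all_goals simp only [sum_Icc_one_two_neg_one_pow_mul, one_rpow, reduceIte, OfNat.ofNat_ne_one,
    add_zero, zero_rpow hp0.ne', sub_zero, sub_self]
  · linarith
  · calc (0 ^ (1 / p) + (t ^ p) ^ (1 / p)) / ((1 + t) ^ p - 1) ^ (1 / p)
        = t / ((1 + t) ^ p - 1) ^ (1 / p) := by
          rw [zero_rpow (by positivity), zero_add, ← rpow_mul ht.le, mul_one_div_cancel hp0.ne',
            rpow_one]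
      _ < t ^ (1 - 1 / p) := div_rpow_one_div_lt_rpow_one_sub hp0 ht hD
      _ = ε := rpow_inv_rpow hε.le hq.ne'
end
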